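/- Let b ∈ z⁻¹ℂ[[z⁻¹]] and b₁ ∈ z⁻²ℂ[[z⁻¹]]. Let E denote the inverse of the bijection C_{id−1} − Id : z⁻¹ℂ[[z⁻¹]] → z⁻²ℂ[[z⁻¹]] and let B := C_{id+b} − Id. Then for every k ≥ 0 the formal series φ̃ₖ := (E B)^k E b₁ lies in z^{−k−1}ℂ[[z⁻¹]], the series Σ_{k≥0} φ̃ₖ is formally convergent (for each n ≥ 0 only finitely many φ̃ₖ have a nonzero coefficient of z^{−n−1}), and its sum is the unique solution in z⁻¹ℂ[[z⁻¹]] of C_{id−1}φ = C_{id+b}φ + b₁. -/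

import Mathlib

open Finset
open scoped Real

noncomputable section

/-- The formal derivative `d/dz` acting on `ℂ[[z⁻¹]]`: here a power series is an
element of `PowerSeries ℂ` whose `n`-th coefficient represents the coefficient
of `z^{-n}`, and `d/dz (z^{-n}) = -n z^{-n-1}`. -/
def Dz (φ : PowerSeries ℂ) : PowerSeries ℂ :=
  PowerSeries.mk fun n => match n with
    | 0 => 0
    | m + 1 => -(m : ℂ) * PowerSeries.coeff (R := ℂ) m φ

/-- The composition operator `C_{id-1} : φ(z) ↦ φ(z-1)` on `ℂ[[z⁻¹]]`, defined by
the formal Taylor expansion `Σ_{k≥0} ((-1)^k / k!) (d/dz)^k φ`; since `(d/dz)^k`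
raises the order in `z⁻¹` by at least `k`, the `n`-th coefficient only receives
contributions from `k ≤ n`. -/
def Cm1 (φ : PowerSeries ℂ) : PowerSeries ℂ :=
  PowerSeries.mk fun n => ∑ k ∈ Finset.range (n + 1),
    ((-1 : ℂ) ^ k / (Nat.factorial k : ℂ)) * PowerSeries.coeff (R := ℂ) n (Dz^[k] φ)

/-- The composition operator `C_{id+b} : φ(z) ↦ φ(z+b(z))` on `ℂ[[z⁻¹]]`, defined
by the formal Taylor expansion `Σ_{k≥0} (b^k / k!) (d/dz)^k φ`; it is well defined
when `b ∈ z⁻¹ℂ[[z⁻¹]]`, in which case the `n`-th coefficient only receives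
contributions from `k ≤ n`. -/
def Cb (b φ : PowerSeries ℂ) : PowerSeries ℂ :=
  PowerSeries.mk fun n => ∑ k ∈ Finset.range (n + 1),
    ((Nat.factorial k : ℂ))⁻¹ * PowerSeries.coeff (R := ℂ) n (b ^ k * Dz^[k] φ)

open PowerSeries

/-!
Write `L := C_{id-1} - Id` and `B := C_{id+b} - Id`. Since `d/dz` raises the order in `z⁻¹` by one,
`L` raises it by exactly one on `z⁻¹ℂ[[z⁻¹]]` (its leading term is `z^{-m} ↦ m z^{-m-1}`), while `B`
raises it by at least two because `b = O(z⁻¹)`. Hence `E` lowers the order by at most one, `E B` raises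
it by one, and `φ̃ₖ = O(z^{-k-1})`. The relations `L φ̃₀ = b₁`, `L φ̃ₖ₊₁ = B φ̃ₖ` telescope: the `n`-th
partial sum solves the equation up to `L φ̃ₙ = O(z^{-n-2})`, so the full sum solves it exactly.
Uniqueness is the same order count applied to the difference `δ` of two solutions, for which `L δ = B δ`.
-/

theorem PowerSeries.eq_zero_of_forall_X_pow_dvd {R : Type*} [Semiring R] {φ : PowerSeries R}
    (h : ∀ n, X ^ n ∣ φ) : φ = 0 := by
  ext n
  exact X_pow_dvd_iff.mp (h (n + 1)) n n.lt_succ_self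

theorem PowerSeries.X_dvd_iff_coeff_zero {R : Type*} [Semiring R] {φ : PowerSeries R} :
    X ∣ φ ↔ coeff 0 φ = 0 := by
  rw [X_dvd_iff, coeff_zero_eq_constantCoeff_apply]

theorem coeff_Dz_succ (φ : PowerSeries ℂ) (n : ℕ) :
    coeff (n + 1) (Dz φ) = -(n : ℂ) * coeff n φ := by
  simp [Dz]

theorem Dz_add (φ ψ : PowerSeries ℂ) : Dz (φ + ψ) = Dz φ + Dz ψ := by
  ext (_ | n) <;> simp [Dz, mul_add]

theorem iterate_Dz_add (k : ℕ) (φ ψ : PowerSeries ℂ) :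
    Dz^[k] (φ + ψ) = Dz^[k] φ + Dz^[k] ψ :=
  iterate_map_add (AddMonoidHom.mk' Dz Dz_add) k φ ψ

theorem X_pow_succ_dvd_Dz {m : ℕ} {φ : PowerSeries ℂ} (h : X ^ m ∣ φ) : X ^ (m + 1) ∣ Dz φ := by
  refine X_pow_dvd_iff.mpr fun n hn => ?_
  rcases n with _ | n
  · simp [Dz]
  · rw [coeff_Dz_succ, X_pow_dvd_iff.mp h n (by omega), mul_zero]

theorem X_pow_add_dvd_iterate_Dz {m : ℕ} {φ : PowerSeries ℂ} (h : X ^ m ∣ φ) (k : ℕ) :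
    X ^ (m + k) ∣ Dz^[k] φ := by
  induction k with
  | zero => simpa
  | succ k ih =>
    rw [Function.iterate_succ_apply']
    exact X_pow_succ_dvd_Dz ih

theorem Cm1_add (φ ψ : PowerSeries ℂ) : Cm1 (φ + ψ) = Cm1 φ + Cm1 ψ := by
  ext n
  simp [Cm1, iterate_Dz_add, mul_add, sum_add_distrib]

theorem Cb_add (b φ ψ : PowerSeries ℂ) : Cb b (φ + ψ) = Cb b φ + Cb b ψ := by
  ext n
  simp [Cb, iterate_Dz_add, mul_add, sum_add_distrib]

theorem Cm1_sub (φ ψ : PowerSeries ℂ) : Cm1 (φ - ψ) = Cm1 φ - Cm1 ψ :=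
  map_sub (AddMonoidHom.mk' Cm1 Cm1_add) φ ψ

theorem Cb_sub (b φ ψ : PowerSeries ℂ) : Cb b (φ - ψ) = Cb b φ - Cb b ψ :=
  map_sub (AddMonoidHom.mk' (Cb b) (Cb_add b)) φ ψ

theorem Cm1_sum {ι : Type*} (s : Finset ι) (f : ι → PowerSeries ℂ) :
    Cm1 (∑ i ∈ s, f i) = ∑ i ∈ s, Cm1 (f i) :=
  map_sum (AddMonoidHom.mk' Cm1 Cm1_add) f s

theorem Cb_sum {ι : Type*} (b : PowerSeries ℂ) (s : Finset ι) (f : ι → PowerSeries ℂ) :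
    Cb b (∑ i ∈ s, f i) = ∑ i ∈ s, Cb b (f i) :=
  map_sum (AddMonoidHom.mk' (Cb b) (Cb_add b)) f s

theorem coeff_Cm1_sub_self (φ : PowerSeries ℂ) (n : ℕ) :
    coeff n (Cm1 φ - φ) =
      ∑ k ∈ range n, (-1 : ℂ) ^ (k + 1) / (k + 1).factorial * coeff n (Dz^[k + 1] φ) := by
  rw [map_sub, Cm1, coeff_mk, sum_range_succ']
  simp

theorem coeff_Cb_sub_self (b φ : PowerSeries ℂ) (n : ℕ) :
    coeff n (Cb b φ - φ) =
      ∑ k ∈ range n, ((k + 1).factorial : ℂ)⁻¹ * coeff n (b ^ (k + 1) * Dz^[k + 1] φ) := by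
  rw [map_sub, Cb, coeff_mk, sum_range_succ']
  simp

theorem X_pow_succ_dvd_Cm1_sub_self {m : ℕ} {φ : PowerSeries ℂ} (h : X ^ m ∣ φ) :
    X ^ (m + 1) ∣ Cm1 φ - φ := by
  refine X_pow_dvd_iff.mpr fun n hn => ?_
  rw [coeff_Cm1_sub_self]
  refine sum_eq_zero fun k _ => ?_
  rw [X_pow_dvd_iff.mp (X_pow_add_dvd_iterate_Dz h (k + 1)) n (by omega), mul_zero]

theorem X_pow_add_two_dvd_Cb_sub_self {m : ℕ} {b φ : PowerSeries ℂ} (hb : X ∣ b)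
    (h : X ^ m ∣ φ) : X ^ (m + 2) ∣ Cb b φ - φ := by
  refine X_pow_dvd_iff.mpr fun n hn => ?_
  rw [coeff_Cb_sub_self]
  refine sum_eq_zero fun k _ => ?_
  have hX : X ^ (m + 2) ∣ b ^ (k + 1) * Dz^[k + 1] φ := by
    rw [pow_succ']
    exact mul_dvd_mul (dvd_pow hb k.succ_ne_zero)
      ((pow_dvd_pow X (by omega)).trans (X_pow_add_dvd_iterate_Dz h (k + 1)))
  rw [X_pow_dvd_iff.mp hX n hn, mul_zero]

theorem coeff_succ_Cm1_sub_self {m : ℕ} {φ : PowerSeries ℂ} (h : X ^ m ∣ φ) :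
    coeff (m + 1) (Cm1 φ - φ) = m * coeff m φ := by
  rw [coeff_Cm1_sub_self, sum_range_succ', sum_eq_zero fun k _ => by
    rw [X_pow_dvd_iff.mp (X_pow_add_dvd_iterate_Dz h (k + 2)) (m + 1) (by omega), mul_zero]]
  simp [coeff_Dz_succ]

theorem X_pow_dvd_of_X_pow_succ_dvd_Cm1_sub_self {φ : PowerSeries ℂ} (h0 : X ∣ φ) {m : ℕ}
    (h : X ^ (m + 1) ∣ Cm1 φ - φ) : X ^ m ∣ φ := by
  induction m with
  | zero => exact one_dvd φ
  | succ m ih =>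
    have hm : X ^ m ∣ φ := ih ((pow_dvd_pow X (by omega)).trans h)
    rcases m.eq_zero_or_pos with rfl | hpos
    · simpa using h0
    refine X_pow_dvd_iff.mpr fun n hn => ?_
    rcases (by omega : n < m ∨ n = m) with hn | rfl
    · exact X_pow_dvd_iff.mp hm n hn
    · have hlead := X_pow_dvd_iff.mp h (n + 1) (by omega)
      rw [coeff_succ_Cm1_sub_self hm] at hlead
      exact (mul_eq_zero.mp hlead).resolve_left (by exact_mod_cast hpos.ne')

theorem eq_of_Cm1_eq_Cb_add {b c φ ψ : PowerSeries ℂ} (hb : X ∣ b) (hφ : X ∣ φ) (hψ : X ∣ ψ)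
    (hφc : Cm1 φ = Cb b φ + c) (hψc : Cm1 ψ = Cb b ψ + c) : φ = ψ := by
  have hδ : Cm1 (φ - ψ) = Cb b (φ - ψ) := by
    rw [Cm1_sub, Cb_sub, hφc, hψc]
    abel
  refine sub_eq_zero.mp (eq_zero_of_forall_X_pow_dvd fun m => ?_)
  induction m with
  | zero => exact one_dvd _
  | succ m ih =>
    exact X_pow_dvd_of_X_pow_succ_dvd_Cm1_sub_self (dvd_sub hφ hψ)
      (hδ ▸ X_pow_add_two_dvd_Cb_sub_self hb ih)

/-- `Σₖ φₖ` for `φₖ = O(z^{-k-1})`: only the terms `k < n` can contribute to the coefficient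
of `z^{-n}`. -/
def formalSum (φ : ℕ → PowerSeries ℂ) : PowerSeries ℂ :=
  mk fun n => ∑ k ∈ range n, coeff n (φ k)

theorem X_pow_succ_dvd_formalSum_sub_sum {φ : ℕ → PowerSeries ℂ} (hφ : ∀ k, X ^ (k + 1) ∣ φ k)
    (n : ℕ) : X ^ (n + 1) ∣ formalSum φ - ∑ k ∈ range n, φ k := by
  refine X_pow_dvd_iff.mpr fun j hj => ?_
  have htail : ∑ k ∈ Ico j n, coeff j (φ k) = 0 :=
    sum_eq_zero fun k hk => X_pow_dvd_iff.mp (hφ k) j (by simp only [mem_Ico] at hk; omega)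
  rw [map_sub, map_sum, formalSum, coeff_mk, ← sum_range_add_sum_Ico _ (by omega : j ≤ n), htail,
    add_zero, sub_self]

theorem Cm1_formalSum {b b₁ : PowerSeries ℂ} (hb : X ∣ b) {φ : ℕ → PowerSeries ℂ}
    (hφ : ∀ k, X ^ (k + 1) ∣ φ k) (h0 : Cm1 (φ 0) - φ 0 = b₁)
    (hsucc : ∀ k, Cm1 (φ (k + 1)) - φ (k + 1) = Cb b (φ k) - φ k) :
    Cm1 (formalSum φ) = Cb b (formalSum φ) + b₁ := by
  rw [← sub_eq_zero, ← sub_sub]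
  refine eq_zero_of_forall_X_pow_dvd fun n => (pow_dvd_pow X (by omega : n ≤ n + 2)).trans ?_
  have htel : ∑ k ∈ range n, (Cm1 (φ k) - Cb b (φ k)) = b₁ - (Cm1 (φ n) - φ n) := by
    rw [← h0, ← sum_range_sub' (fun k => Cm1 (φ k) - φ k)]
    refine sum_congr rfl fun k _ => ?_
    rw [hsucc]
    abel
  obtain ⟨δ, hδ, hsplit⟩ : ∃ δ, X ^ (n + 1) ∣ δ ∧ formalSum φ = δ + ∑ k ∈ range n, φ k :=
    ⟨_, X_pow_succ_dvd_formalSum_sub_sum hφ n, (sub_add_cancel _ _).symm⟩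
  have hrest : Cm1 (formalSum φ) - Cb b (formalSum φ) - b₁ =
      (Cm1 δ - δ) - (Cb b δ - δ) - (Cm1 (φ n) - φ n) := by
    rw [sum_sub_distrib] at htel
    rw [hsplit, Cm1_add, Cb_add, Cm1_sum, Cb_sum]
    linear_combination htel
  rw [hrest]
  exact dvd_sub (dvd_sub ((pow_dvd_pow X (by omega)).trans (X_pow_succ_dvd_Cm1_sub_self hδ))
    ((pow_dvd_pow X (by omega)).trans (X_pow_add_two_dvd_Cb_sub_self hb hδ)))
    (X_pow_succ_dvd_Cm1_sub_self (hφ n))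

section RightInverse

variable {E : PowerSeries ℂ → PowerSeries ℂ}
  (hE : ∀ ψ, X ^ 2 ∣ ψ → X ∣ E ψ ∧ Cm1 (E ψ) - E ψ = ψ)
include hE

theorem X_pow_succ_dvd_E {m : ℕ} {ψ : PowerSeries ℂ} (h : X ^ (m + 2) ∣ ψ) :
    X ^ (m + 1) ∣ E ψ := by
  obtain ⟨h0, hL⟩ := hE ψ ((pow_dvd_pow X (by omega)).trans h)
  exact X_pow_dvd_of_X_pow_succ_dvd_Cm1_sub_self h0 (by rwa [hL])

theorem X_pow_succ_dvd_iterate_E {b b₁ : PowerSeries ℂ} (hb : X ∣ b) (hb₁ : X ^ 2 ∣ b₁) (k : ℕ) :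
    X ^ (k + 1) ∣ (fun ψ => E (Cb b ψ - ψ))^[k] (E b₁) := by
  induction k with
  | zero => exact X_pow_succ_dvd_E hE hb₁
  | succ k ih =>
    rw [Function.iterate_succ_apply']
    exact X_pow_succ_dvd_E hE (X_pow_add_two_dvd_Cb_sub_self hb ih)

theorem Cm1_sub_self_E_Cb_sub_self {b : PowerSeries ℂ} (hb : X ∣ b) (φ : PowerSeries ℂ) :
    Cm1 (E (Cb b φ - φ)) - E (Cb b φ - φ) = Cb b φ - φ :=
  (hE _ (by simpa using X_pow_add_two_dvd_Cb_sub_self (m := 0) hb (one_dvd φ))).2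

end RightInverse

/-- with `E` the inverse of `C_{id-1} - Id : z⁻¹ℂ[[z⁻¹]] → z⁻²ℂ[[z⁻¹]]`
and `B := C_{id+b} - Id`, the series `φ̃ₖ := (E B)^k E b₁` lies in `z^{-k-1}ℂ[[z⁻¹]]`,
the series `Σ_{k≥0} φ̃ₖ` is formally convergent, and its sum is the unique solution
in `z⁻¹ℂ[[z⁻¹]]` of `C_{id-1}φ = C_{id+b}φ + b₁`. -/
theorem statement1 (b b₁ : PowerSeries ℂ)
    (hb : PowerSeries.coeff (R := ℂ) 0 b = 0)
    (hb₁ : ∀ n < 2, PowerSeries.coeff (R := ℂ) n b₁ = 0)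
    (E : PowerSeries ℂ → PowerSeries ℂ)
    (hE : ∀ ψ : PowerSeries ℂ, (∀ n < 2, PowerSeries.coeff (R := ℂ) n ψ = 0) →
      PowerSeries.coeff (R := ℂ) 0 (E ψ) = 0 ∧ Cm1 (E ψ) - E ψ = ψ) :
    let B : PowerSeries ℂ → PowerSeries ℂ := fun φ => Cb b φ - φ
    let φk : ℕ → PowerSeries ℂ := fun k => (fun ψ => E (B ψ))^[k] (E b₁)
    let S : PowerSeries ℂ :=
      PowerSeries.mk fun n => ∑ k ∈ Finset.range n, PowerSeries.coeff (R := ℂ) n (φk k)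
    (∀ k, ∀ n < k + 1, PowerSeries.coeff (R := ℂ) n (φk k) = 0) ∧
    (∀ n, {k : ℕ | PowerSeries.coeff (R := ℂ) n (φk k) ≠ 0}.Finite) ∧
    (∀ φ : PowerSeries ℂ,
      (PowerSeries.coeff (R := ℂ) 0 φ = 0 ∧ Cm1 φ = Cb b φ + b₁) ↔ φ = S) := by
  intro B φk S
  have hbX : X ∣ b := X_dvd_iff_coeff_zero.mpr hb
  have hb₁X : X ^ 2 ∣ b₁ := X_pow_dvd_iff.mpr hb₁
  have hEX : ∀ ψ, X ^ 2 ∣ ψ → X ∣ E ψ ∧ Cm1 (E ψ) - E ψ = ψ := fun ψ hψ =>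
    (hE ψ (X_pow_dvd_iff.mp hψ)).imp_left X_dvd_iff_coeff_zero.mpr
  have hord : ∀ k, X ^ (k + 1) ∣ φk k := X_pow_succ_dvd_iterate_E hEX hbX hb₁X
  have hS : Cm1 S = Cb b S + b₁ := Cm1_formalSum hbX hord (hEX b₁ hb₁X).2 fun k => by
    rw [show φk (k + 1) = E (B (φk k)) from Function.iterate_succ_apply' _ _ _]
    exact Cm1_sub_self_E_Cb_sub_self hEX hbX (φk k)
  have hSX : X ∣ S := X_dvd_iff_coeff_zero.mpr (by simp [S])
  refine ⟨fun k => X_pow_dvd_iff.mp (hord k), fun n => ?_, fun φ => ⟨fun ⟨h0, hφ⟩ => ?_, ?_⟩⟩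
  · refine (Set.finite_Iio n).subset fun k hk => ?_
    by_contra hkn
    exact hk (X_pow_dvd_iff.mp (hord k) n (by simpa using hkn))
  · exact eq_of_Cm1_eq_Cb_add hbX (X_dvd_iff_coeff_zero.mpr h0) hSX hφ hS
  · rintro rfl
    exact ⟨X_dvd_iff_coeff_zero.mp hSX, hS⟩
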